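/- Let p : ℕ → (1,∞) be such that ∏_{k=1}^∞ 2^{1 − 1/p(k)} < 2. Then the space ℓ^{p(·)} is not weakly locally uniformly rotund: there exist a vector x with Φ_p(x) = 1, a sequence (x_n) with Φ_p(x_n) = 1 for all n and Φ_p(x + x_n) → 2 as n → ∞, and a continuous linear functional f on ℓ^{p(·)} such that f(x_n) does not converge to f(x). -/

import Mathlib

open scoped ENNReal

/-- `t ⊞_p s`: for `p < ∞`, `(t^p + s^p)^(1/p)`; for `p = ∞`, `max t s`. -/
noncomputable def boxPlus (p : ℝ≥0∞) (t s : ℝ) : ℝ :=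
  if p = ∞ then max t s else (t ^ p.toReal + s ^ p.toReal) ^ (1 / p.toReal)

/-- The recursively defined seminorms `|||x|||_(k)` (0-indexed). -/
noncomputable def seqNorm (p : ℕ → ℝ≥0∞) (x : ℕ → ℝ) : ℕ → ℝ
  | 0 => boxPlus (p 0) |x 0| |x 1|
  | k + 1 => boxPlus (p (k + 1)) (seqNorm p x k) |x (k + 2)|

/-- `Φ_p(x) = lim_k |||x|||_(k)`, as the supremum of the nondecreasing sequence. -/
noncomputable def Phi (p : ℕ → ℝ≥0∞) (x : ℕ → ℝ) : ℝ≥0∞ :=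
  ⨆ k, ENNReal.ofReal (seqNorm p x k)

/-- `x` is a bounded real sequence, i.e. `x ∈ ℓ^∞`. -/
def IsBddSeq (x : ℕ → ℝ) : Prop := ∃ M : ℝ, ∀ n, |x n| ≤ M

/-- Membership in the variable exponent space `ℓ^{p(·)}`. -/
def MemVLp (p : ℕ → ℝ≥0∞) (x : ℕ → ℝ) : Prop := IsBddSeq x ∧ Phi p x < ⊤

/-- The exponent function `ℕ → [1,∞]` associated with a real exponent function. -/
noncomputable def toE (p : ℕ → ℝ) : ℕ → ℝ≥0∞ := fun k => ENNReal.ofReal (p k)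

/-!
The unit vectors `e₀` and `eₙ₊₁` satisfy `‖e₀ + eₙ₊₁‖ = 1 ⊞_{p(n)} 1 = 2^{1/p(n)}`, and
summability of `1 - 1/p(k)` forces `p(n) → 1`, so `‖e₀ + eₙ₊₁‖ → 2`. Yet the first coordinate
functional, which is bounded by the norm, takes the value `0` at every `eₙ₊₁` and `1` at `e₀`.
-/

open Filter Topology

section BoxPlus

variable {p : ℝ≥0∞} {t s : ℝ}

lemma boxPlus_of_ne_top (hp : p ≠ ∞) (t s : ℝ) :
    boxPlus p t s = (t ^ p.toReal + s ^ p.toReal) ^ (1 / p.toReal) :=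
  if_neg hp

lemma boxPlus_nonneg (ht : 0 ≤ t) (hs : 0 ≤ s) : 0 ≤ boxPlus p t s := by
  unfold boxPlus
  split_ifs
  · exact le_max_of_le_left ht
  · positivity

lemma le_boxPlus_left (hp : p ≠ 0) (ht : 0 ≤ t) (hs : 0 ≤ s) : t ≤ boxPlus p t s := by
  by_cases htop : p = ∞
  · simp only [boxPlus, if_pos htop, le_max_left]
  have hq : p.toReal ≠ 0 := ENNReal.toReal_ne_zero.mpr ⟨hp, htop⟩
  rw [boxPlus_of_ne_top htop]
  calc t = (t ^ p.toReal) ^ (1 / p.toReal) := by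
        rw [← Real.rpow_mul ht, mul_one_div_cancel hq, Real.rpow_one]
    _ ≤ (t ^ p.toReal + s ^ p.toReal) ^ (1 / p.toReal) := by
        gcongr
        exact le_add_of_nonneg_right (by positivity)

lemma boxPlus_zero_right (hp : p ≠ 0) (ht : 0 ≤ t) : boxPlus p t 0 = t := by
  by_cases htop : p = ∞
  · simp only [boxPlus, if_pos htop, max_eq_left ht]
  have hq : p.toReal ≠ 0 := ENNReal.toReal_ne_zero.mpr ⟨hp, htop⟩
  rw [boxPlus_of_ne_top htop, Real.zero_rpow hq, add_zero, ← Real.rpow_mul ht,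
    mul_one_div_cancel hq, Real.rpow_one]

lemma boxPlus_zero_left (hp : p ≠ 0) (hs : 0 ≤ s) : boxPlus p 0 s = s := by
  by_cases htop : p = ∞
  · simp only [boxPlus, if_pos htop, max_eq_right hs]
  have hq : p.toReal ≠ 0 := ENNReal.toReal_ne_zero.mpr ⟨hp, htop⟩
  rw [boxPlus_of_ne_top htop, Real.zero_rpow hq, zero_add, ← Real.rpow_mul hs,
    mul_one_div_cancel hq, Real.rpow_one]

/-- For `p = ∞` both sides are `1`, the right one because `∞⁻¹ = 0`. -/
lemma boxPlus_one_one (p : ℝ≥0∞) : boxPlus p 1 1 = 2 ^ p⁻¹.toReal := by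
  by_cases htop : p = ∞
  · simp [boxPlus, htop]
  rw [boxPlus_of_ne_top htop, Real.one_rpow, ENNReal.toReal_inv, one_div]
  norm_num

end BoxPlus

section SeqNorm

variable {p : ℕ → ℝ≥0∞}

lemma abs_apply_zero_le_Phi (hp : p 0 ≠ 0) (x : ℕ → ℝ) :
    ENNReal.ofReal |x 0| ≤ Phi p x :=
  le_iSup_of_le 0 <| ENNReal.ofReal_le_ofReal <|
    le_boxPlus_left hp (abs_nonneg _) (abs_nonneg _)

lemma seqNorm_single_add_single (hp : ∀ k, p k ≠ 0) (a b : ℝ) (j k : ℕ) :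
    seqNorm p (Pi.single 0 a + Pi.single (j + 1) b) k =
      if k < j then |a| else boxPlus (p j) |a| |b| := by
  induction k with
  | zero =>
    rcases Nat.eq_zero_or_pos j with rfl | hj
    · simp [seqNorm]
    · simp [seqNorm, hj, hj.ne', boxPlus_zero_right (hp 0)]
  | succ k ih =>
    have hbox := boxPlus_nonneg (p := p j) (abs_nonneg a) (abs_nonneg b)
    rw [seqNorm, ih]
    rcases lt_trichotomy (k + 1) j with h | rfl | h
    · simp [h, (Nat.lt_succ_self k).trans h, h.ne', boxPlus_zero_right (hp _)]
    · simp
    · simp [h.ne, not_lt.mpr (Nat.lt_succ_iff.mp h), not_lt.mpr h.le,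
        boxPlus_zero_right (hp _) hbox]

lemma Phi_single_add_single (hp : ∀ k, p k ≠ 0) (a b : ℝ) (j : ℕ) :
    Phi p (Pi.single 0 a + Pi.single (j + 1) b) = ENNReal.ofReal (boxPlus (p j) |a| |b|) := by
  refine le_antisymm (iSup_le fun k => ENNReal.ofReal_le_ofReal ?_) (le_iSup_of_le j ?_)
  · rw [seqNorm_single_add_single hp]
    split_ifs
    · exact le_boxPlus_left (hp j) (abs_nonneg a) (abs_nonneg b)
    · rfl
  · rw [seqNorm_single_add_single hp, if_neg (lt_irrefl j)]

lemma Phi_single_one (hp : ∀ k, p k ≠ 0) (m : ℕ) : Phi p (Pi.single m 1) = 1 := by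
  cases m with
  | zero =>
    simpa [boxPlus_zero_right (hp 0)] using Phi_single_add_single hp 1 0 0
  | succ n =>
    simpa [boxPlus_zero_left (hp n)] using Phi_single_add_single hp 0 1 n

lemma memVLp_single_one (hp : ∀ k, p k ≠ 0) (m : ℕ) : MemVLp p (Pi.single m 1) := by
  refine ⟨⟨1, fun n => ?_⟩, by simp [Phi_single_one hp]⟩
  rcases eq_or_ne n m with rfl | h <;> simp [*]

end SeqNorm

lemma toE_ne_zero {p : ℕ → ℝ} (hp : ∀ k, 1 < p k) (k : ℕ) : toE p k ≠ 0 := by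
  simpa [toE] using (zero_lt_one.trans (hp k))

lemma tendsto_Phi_single_zero_add_single_succ {p : ℕ → ℝ} (hp : ∀ k, 1 < p k)
    (hsum : Summable fun k => 1 - 1 / p k) :
    Tendsto (fun n => Phi (toE p) (Pi.single 0 1 + Pi.single (n + 1) 1)) atTop (𝓝 2) := by
  have hinv : Tendsto (fun n => (p n)⁻¹) atTop (𝓝 1) := by
    simpa using (tendsto_const_nhds (x := (1 : ℝ))).sub hsum.tendsto_atTop_zero
  have hpow : Tendsto (fun n => (2 : ℝ) ^ (p n)⁻¹) atTop (𝓝 2) := by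
    simpa using tendsto_const_nhds.rpow hinv (Or.inl two_ne_zero)
  have hPhi : ∀ n, Phi (toE p) (Pi.single 0 1 + Pi.single (n + 1) 1) =
      ENNReal.ofReal (2 ^ (p n)⁻¹) := fun n => by
    rw [Phi_single_add_single (toE_ne_zero hp), abs_one, boxPlus_one_one, toE,
      ENNReal.toReal_inv, ENNReal.toReal_ofReal (zero_lt_one.trans (hp n)).le]
  simpa [hPhi, Function.comp_def] using (ENNReal.continuous_ofReal.tendsto 2).comp hpow

theorem not_weakly_LUR_general (p : ℕ → ℝ) (hp : ∀ k, 1 < p k)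
    (hsum : Summable fun k => 1 - 1 / p k) :
    ∃ (x : ℕ → ℝ) (xs : ℕ → ℕ → ℝ) (f : (ℕ → ℝ) → ℝ),
      MemVLp (toE p) x ∧ Phi (toE p) x = 1 ∧
      (∀ n, MemVLp (toE p) (xs n) ∧ Phi (toE p) (xs n) = 1) ∧
      Filter.Tendsto (fun n => Phi (toE p) (x + xs n)) Filter.atTop (nhds 2) ∧
      (∀ u v : ℕ → ℝ, MemVLp (toE p) u → MemVLp (toE p) v →
        f (u + v) = f u + f v) ∧
      (∀ (c : ℝ) (u : ℕ → ℝ), MemVLp (toE p) u → f (c • u) = c * f u) ∧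
      (∃ C : ℝ, ∀ u : ℕ → ℝ, MemVLp (toE p) u →
        |f u| ≤ C * (Phi (toE p) u).toReal) ∧
      ¬ Filter.Tendsto (fun n => f (xs n)) Filter.atTop (nhds (f x)) := by
  have hp₀ := toE_ne_zero hp
  refine ⟨Pi.single 0 1, fun n => Pi.single (n + 1) 1, fun u => u 0,
    memVLp_single_one hp₀ 0, Phi_single_one hp₀ 0,
    fun n => ⟨memVLp_single_one hp₀ _, Phi_single_one hp₀ _⟩,
    tendsto_Phi_single_zero_add_single_succ hp hsum,
    fun _ _ _ _ => rfl, fun _ _ _ => rfl, ⟨1, fun u hu => ?_⟩, ?_⟩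
  · rw [one_mul, ← ENNReal.ofReal_le_iff_le_toReal hu.2.ne]
    exact abs_apply_zero_le_Phi (hp₀ 0) u
  · simp

/-- If `p : ℕ → (1,∞)` satisfies `∏ₖ 2^{1-1/p(k)} = 2^{∑ₖ (1-1/p(k))} < 2`, then
`ℓ^{p(·)}` is not weakly locally uniformly rotund: there are a unit vector `x`,
a sequence `(xₙ)` of unit vectors with `‖x + xₙ‖ → 2`, and a continuous linear
functional `f` on `ℓ^{p(·)}` with `f(xₙ) ↛ f(x)`. -/
theorem not_weakly_LUR (p : ℕ → ℝ) (hp : ∀ k, 1 < p k)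
    (hsum : Summable fun k => 1 - 1 / p k)
    (hC : (2 : ℝ) ^ (∑' k, (1 - 1 / p k)) < 2) :
    ∃ (x : ℕ → ℝ) (xs : ℕ → ℕ → ℝ) (f : (ℕ → ℝ) → ℝ),
      MemVLp (toE p) x ∧ Phi (toE p) x = 1 ∧
      (∀ n, MemVLp (toE p) (xs n) ∧ Phi (toE p) (xs n) = 1) ∧
      Filter.Tendsto (fun n => Phi (toE p) (x + xs n)) Filter.atTop (nhds 2) ∧
      (∀ u v : ℕ → ℝ, MemVLp (toE p) u → MemVLp (toE p) v →
        f (u + v) = f u + f v) ∧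
      (∀ (c : ℝ) (u : ℕ → ℝ), MemVLp (toE p) u → f (c • u) = c * f u) ∧
      (∃ C : ℝ, ∀ u : ℕ → ℝ, MemVLp (toE p) u →
        |f u| ≤ C * (Phi (toE p) u).toReal) ∧
      ¬ Filter.Tendsto (fun n => f (xs n)) Filter.atTop (nhds (f x)) :=
  not_weakly_LUR_general p hp hsum
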